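/- Let α ≤ 1/2 and let f be an entire function with |f(0)| = 1 whose zeros are exactly points z_n with |z_n| = √(n+α) for n = 1,2,3,…. Then ∫_ℂ |f(z)|² e^{−|z|²} dm(z) = ∞. Consequently, every sequence of points with moduli √(n+α), α ≤ 1/2, is a uniqueness set for the classical Fock space F². -/

import Mathlib

/-!
Divide out the zeros `z₁, …, z_m`, `f = h · ∏ (w - zₙ)`, and apply the mean value property to
`(h · ∏ (r² - z̄ₙ w))²`, whose modulus on `|w| = r` is `r^{2m} |f|²`. This gives
`∫₀^{2π} |f(re^{iθ})|² dθ ≥ 2π r^{2m} / ∏ₙ₌₁^m (n + α)` for every `m`. On the annulus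
`m + α < r² < m + 1 + α` take this `m`: the contribution of the annulus to the Fock integral is
then at least a constant times `(m + α)^m e^{-(m + α)} / ∏ₙ₌₁^m (n + α)`, which by a Stirling-type
estimate of `∑ log (n + α)` is `≳ (m + α)^{-(α + 1/2)} ≥ 1/(m + 1)` when `α ≤ 1/2`. The
harmonic series diverges.
-/

open MeasureTheory Complex Set
open Real Filter Finset ComplexConjugate

theorem Differentiable.exists_eq_mul_prod_sub {f : ℂ → ℂ} (hf : Differentiable ℂ f)
    (s : Finset ℂ) (hs : ∀ a ∈ s, f a = 0) :
    ∃ h : ℂ → ℂ, Differentiable ℂ h ∧ ∀ w, f w = h w * ∏ a ∈ s, (w - a) := by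
  induction s using Finset.induction_on with
  | empty => exact ⟨f, hf, by simp⟩
  | insert a s ha ih =>
    obtain ⟨h, hh, hfh⟩ := ih fun b hb => hs b (mem_insert_of_mem hb)
    have hprod : ∏ b ∈ s, (a - b) ≠ 0 :=
      prod_ne_zero_iff.2 fun b hb => sub_ne_zero.2 (ne_of_mem_of_not_mem hb ha).symm
    have hha : h a = 0 := by
      have := hs a (mem_insert_self a s)
      rw [hfh] at this
      exact (mul_eq_zero.1 this).resolve_right hprod
    refine ⟨dslope h a, ?_, fun w => ?_⟩
    · rw [← differentiableOn_univ, Complex.differentiableOn_dslope univ_mem]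
      exact hh.differentiableOn
    · have hsplit : (w - a) * dslope h a w = h w := by
        rw [← smul_eq_mul, sub_smul_dslope, hha, sub_zero]
      rw [prod_insert ha, hfh, ← hsplit]
      ring

theorem Real.norm_circleAverage_le {E : Type*} [NormedAddCommGroup E] [NormedSpace ℝ E]
    (f : ℂ → E) (c : ℂ) (R : ℝ) :
    ‖circleAverage f c R‖ ≤ circleAverage (fun w => ‖f w‖) c R := by
  rw [circleAverage_def, circleAverage_def, norm_smul, smul_eq_mul, norm_inv,
    Real.norm_of_nonneg (by positivity)]
  gcongr
  exact intervalIntegral.norm_integral_le_integral_norm (by positivity)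

theorem norm_sq_le_circleAverage_norm_sq {G : ℂ → ℂ} (hG : Differentiable ℂ G) (c : ℂ) (R : ℝ) :
    ‖G c‖ ^ 2 ≤ circleAverage (fun w => ‖G w‖ ^ 2) c R := by
  have hmean : circleAverage (fun w => G w ^ 2) c R = G c ^ 2 :=
    (hG.pow 2).diffContOnCl.circleAverage
  have := norm_circleAverage_le (fun w => G w ^ 2) c R
  rw [hmean] at this
  simpa only [norm_pow] using this

theorem norm_sq_sub_conj_mul_of_norm_eq {w a : ℂ} {r : ℝ} (hw : ‖w‖ = r) :
    ‖(r : ℂ) ^ 2 - conj a * w‖ = r * ‖w - a‖ := by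
  have : (r : ℂ) ^ 2 - conj a * w = w * conj (w - a) := by
    rw [map_sub, mul_sub, mul_conj', hw]; ring
  rw [this, norm_mul, norm_conj, hw]

theorem pow_mul_norm_sq_le_prod_mul_circleAverage {f : ℂ → ℂ} (hf : Differentiable ℂ f)
    (s : Finset ℂ) (hs : ∀ a ∈ s, f a = 0) {r : ℝ} (hr : 0 < r) :
    r ^ (2 * #s) * ‖f 0‖ ^ 2 ≤
      (∏ a ∈ s, ‖a‖ ^ 2) * circleAverage (fun w => ‖f w‖ ^ 2) 0 r := by
  obtain ⟨h, hh, hfh⟩ := hf.exists_eq_mul_prod_sub s hs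
  set G : ℂ → ℂ := fun w => h w * ∏ a ∈ s, ((r : ℂ) ^ 2 - conj a * w)
  have hG0 : ‖G 0‖ = ‖h 0‖ * r ^ (2 * #s) := by
    simp [G, pow_mul, abs_of_pos hr]
  have hGsphere : EqOn (fun w => ‖G w‖ ^ 2) (fun w => r ^ (2 * #s) • ‖f w‖ ^ 2)
      (Metric.sphere 0 |r|) := by
    intro w hw
    rw [mem_sphere_zero_iff_norm, abs_of_pos hr] at hw
    simp only [G, hfh, norm_mul, norm_prod, norm_sq_sub_conj_mul_of_norm_eq hw, prod_mul_distrib,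
      prod_const, smul_eq_mul]
    ring
  have hmean := norm_sq_le_circleAverage_norm_sq (by fun_prop : Differentiable ℂ G) 0 r
  rw [circleAverage_congr_sphere hGsphere, circleAverage_fun_smul, smul_eq_mul, hG0] at hmean
  have hf0 : ‖f 0‖ ^ 2 = ‖h 0‖ ^ 2 * ∏ a ∈ s, ‖a‖ ^ 2 := by
    simp [hfh, mul_pow, Finset.prod_pow]
  refine le_of_mul_le_mul_left ?_ (by positivity : 0 < r ^ (2 * #s))
  rw [hf0]
  calc r ^ (2 * #s) * (r ^ (2 * #s) * (‖h 0‖ ^ 2 * ∏ a ∈ s, ‖a‖ ^ 2))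
      = (‖h 0‖ * r ^ (2 * #s)) ^ 2 * ∏ a ∈ s, ‖a‖ ^ 2 := by ring
    _ ≤ r ^ (2 * #s) * circleAverage (fun w => ‖f w‖ ^ 2) 0 r * ∏ a ∈ s, ‖a‖ ^ 2 := by
      gcongr
    _ = _ := by ring

theorem natCast_add_pos_of_mem_Icc {α : ℝ} (hα : -1 < α) {m n : ℕ} (hn : n ∈ Finset.Icc 1 m) :
    0 < (n : ℝ) + α := by
  have : (1 : ℝ) ≤ n := by exact_mod_cast (Finset.mem_Icc.1 hn).1
  linarith

theorem pow_le_prod_mul_circleAverage {f : ℂ → ℂ} (hf : Differentiable ℂ f) (hf0 : ‖f 0‖ = 1)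
    {α : ℝ} (hα : -1 < α) {z : ℕ → ℂ} (hz : ∀ n, 1 ≤ n → ‖z n‖ = √(n + α))
    (hzero : ∀ n, 1 ≤ n → f (z n) = 0) (m : ℕ) {r : ℝ} (hr : 0 < r) :
    r ^ (2 * m) ≤
      (∏ n ∈ Finset.Icc 1 m, ((n : ℝ) + α)) * circleAverage (fun w => ‖f w‖ ^ 2) 0 r := by
  have hpos n (hn : n ∈ Finset.Icc 1 m) := (natCast_add_pos_of_mem_Icc hα hn).le
  have hinj : InjOn z (Finset.Icc 1 m) := by
    intro i hi j hj hij
    have hnorm := congrArg norm hij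
    rw [hz i (Finset.mem_Icc.1 hi).1, hz j (Finset.mem_Icc.1 hj).1,
      Real.sqrt_inj (hpos i hi) (hpos j hj)] at hnorm
    exact_mod_cast add_right_cancel hnorm
  have key := pow_mul_norm_sq_le_prod_mul_circleAverage hf ((Finset.Icc 1 m).image z)
    (fun a ha => by
      obtain ⟨n, hn, rfl⟩ := Finset.mem_image.1 ha
      exact hzero n (Finset.mem_Icc.1 hn).1) hr
  rw [card_image_of_injOn hinj, Nat.card_Icc, Nat.add_sub_cancel, prod_image hinj, hf0,
    one_pow, mul_one] at key
  convert key using 2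
  refine prod_congr rfl fun n hn => ?_
  rw [hz n (Finset.mem_Icc.1 hn).1, Real.sq_sqrt (hpos n hn)]

theorem Complex.polarCoord_symm_eq_circleMap (r θ : ℝ) :
    Complex.polarCoord.symm (r, θ) = circleMap 0 r θ := by
  simp [circleMap, Complex.exp_mul_I, ← Complex.ofReal_cos, ← Complex.ofReal_sin]

theorem integral_Ioo_neg_pi_pi_eq_circleAverage (u : ℂ → ℝ) (r : ℝ) :
    ∫ θ in Ioo (-π) π, u (circleMap 0 r θ) = 2 * π * circleAverage u 0 r := by
  rw [circleAverage_eq_integral_add (-π), smul_eq_mul, ← mul_assoc,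
    mul_inv_cancel₀ (by positivity), one_mul,
    intervalIntegral.integral_comp_add_right (fun θ => u (circleMap 0 r θ)), zero_add,
    ← integral_Ioc_eq_integral_Ioo, ← intervalIntegral.integral_of_le (by linarith [pi_pos])]
  ring_nf

theorem lintegral_eq_lintegral_Ioi_circleAverage {u : ℂ → ℝ} (hu : Continuous u)
    (hu0 : ∀ w, 0 ≤ u w) :
    ∫⁻ w, ENNReal.ofReal (u w) =
      ∫⁻ r in Ioi 0, ENNReal.ofReal (2 * π * r * circleAverage u 0 r) := by
  have hmeas : Measurable fun p : ℝ × ℝ =>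
      ENNReal.ofReal p.1 • ENNReal.ofReal (u (Complex.polarCoord.symm p)) := by
    simp only [Complex.polarCoord_symm_apply]
    fun_prop
  rw [← Complex.lintegral_comp_polarCoord_symm, polarCoord_target, Measure.volume_eq_prod,
    ← Measure.prod_restrict, lintegral_prod _ hmeas.aemeasurable]
  refine setLIntegral_congr_fun measurableSet_Ioi fun r hr => ?_
  have hint : IntegrableOn (fun θ => u (circleMap 0 r θ)) (Ioo (-π) π) :=
    (hu.comp (continuous_circleMap 0 r)).integrableOn_Icc.mono_set Ioo_subset_Icc_self
  simp only [Complex.polarCoord_symm_eq_circleMap, smul_eq_mul]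
  rw [lintegral_const_mul _ (by fun_prop), ← ofReal_integral_eq_lintegral_ofReal hint
    (Eventually.of_forall fun θ => hu0 _), integral_Ioo_neg_pi_pi_eq_circleAverage,
    ← ENNReal.ofReal_mul (le_of_lt hr)]
  ring_nf

theorem one_third_le_sqrt_mul_sqrt_add_one_sub_sqrt {x : ℝ} (hx : 1 ≤ x) :
    1 / 3 ≤ √x * (√(x + 1) - √x) := by
  have ha : 1 ≤ √x := Real.one_le_sqrt.2 hx
  have ha2 : √x ^ 2 = x := Real.sq_sqrt (by linarith)
  have hb2 : √(x + 1) ^ 2 = x + 1 := Real.sq_sqrt (by linarith)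
  have hb : √(x + 1) ≤ √x + 1 := by
    rw [Real.sqrt_le_left (by positivity)]
    nlinarith
  have hab : √x ≤ √(x + 1) := Real.sqrt_le_sqrt (by linarith)
  nlinarith [mul_nonneg (sub_nonneg.2 hab) (by linarith : 0 ≤ 2 * √x - √(x + 1))]

theorem ofReal_le_lintegral_Ioo_sqrt {M : ℝ → ℝ} {x P : ℝ} (hx : 1 ≤ x) (hP : 0 < P) (m : ℕ)
    (hM : ∀ r ∈ Ioo √x √(x + 1), r ^ (2 * m) ≤ P * M r) :
    ENNReal.ofReal (2 * π / 3 * Real.exp (-1) * (x ^ m * Real.exp (-x) / P)) ≤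
      ∫⁻ r in Ioo √x √(x + 1), ENNReal.ofReal (2 * π * r * (Real.exp (-r ^ 2) * M r)) := by
  have ha : 1 ≤ √x := Real.one_le_sqrt.2 hx
  have hb2 : √(x + 1) ^ 2 = x + 1 := Real.sq_sqrt (by linarith)
  have hlower : ∀ r ∈ Ioo √x √(x + 1),
      2 * π * √x * (Real.exp (-(x + 1)) * (√x ^ (2 * m) / P)) ≤
        2 * π * r * (Real.exp (-r ^ 2) * M r) := by
    rintro r ⟨har, hrb⟩
    have hr : 0 < r := by linarith
    have hexp : Real.exp (-(x + 1)) ≤ Real.exp (-r ^ 2) := Real.exp_le_exp.2 (by nlinarith)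
    have hMr : √x ^ (2 * m) / P ≤ M r := by
      rw [div_le_iff₀' hP]
      exact (pow_le_pow_left₀ (by linarith) har.le _).trans (hM r ⟨har, hrb⟩)
    gcongr
  have hsqrt_pow : √x ^ (2 * m) = x ^ m := by rw [pow_mul, Real.sq_sqrt (by linarith)]
  have hwidth := one_third_le_sqrt_mul_sqrt_add_one_sub_sqrt hx
  calc ENNReal.ofReal (2 * π / 3 * Real.exp (-1) * (x ^ m * Real.exp (-x) / P))
      ≤ ENNReal.ofReal (2 * π * √x * (Real.exp (-(x + 1)) * (√x ^ (2 * m) / P))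
          * (√(x + 1) - √x)) := by
        refine ENNReal.ofReal_le_ofReal ?_
        rw [hsqrt_pow, neg_add', Real.exp_sub, Real.exp_neg 1]
        calc 2 * π / 3 * (Real.exp 1)⁻¹ * (x ^ m * Real.exp (-x) / P)
            = 2 * π * (Real.exp 1)⁻¹ * (x ^ m * Real.exp (-x) / P) * (1 / 3) := by ring
          _ ≤ 2 * π * (Real.exp 1)⁻¹ * (x ^ m * Real.exp (-x) / P) * (√x * (√(x + 1) - √x)) := by
            gcongr
          _ = _ := by ring
    _ = ∫⁻ r in Ioo √x √(x + 1),
          ENNReal.ofReal (2 * π * √x * (Real.exp (-(x + 1)) * (√x ^ (2 * m) / P))) := by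
        rw [setLIntegral_const, Real.volume_Ioo, ← ENNReal.ofReal_mul (by positivity)]
    _ ≤ _ := setLIntegral_mono' measurableSet_Ioo fun r hr =>
        ENNReal.ofReal_le_ofReal (hlower r hr)

theorem two_div_two_mul_add_one_le_log_add_one_sub_log {y : ℝ} (hy : 0 < y) :
    2 / (2 * y + 1) ≤ Real.log (y + 1) - Real.log y := by
  have hsum := hasSum_log_one_add_inv hy
  rw [← Real.log_div (by positivity) hy.ne', add_div, div_self hy.ne', one_div y, div_eq_mul_inv]
  simpa using le_hasSum hsum 0 fun k _ => by positivity

theorem sum_log_add_le {α : ℝ} (hα : -1 < α) {m : ℕ} (hm : 1 ≤ m) :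
    ∑ n ∈ Finset.Icc 1 m, Real.log (n + α) ≤
      (m + α + 1 / 2) * Real.log (m + α) - m + (1 - (α + 1 / 2) * Real.log (1 + α)) := by
  induction m, hm using Nat.le_induction with
  | base => simp only [Finset.Icc_self, sum_singleton, Nat.cast_one]; linarith
  | succ m hm ih =>
    have hy : 0 < (m : ℝ) + α := by
      have : (1 : ℝ) ≤ m := by exact_mod_cast hm
      linarith
    have hstep := two_div_two_mul_add_one_le_log_add_one_sub_log hy
    rw [div_le_iff₀ (by positivity)] at hstep
    rw [sum_Icc_succ_top (by omega)]
    push_cast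
    rw [show (m : ℝ) + 1 + α = m + α + 1 by ring]
    nlinarith

theorem exists_pos_div_le_pow_mul_exp_div_prod {α : ℝ} (hα : α ≤ 1 / 2) (hα' : -1 < α) :
    ∃ κ > 0, ∀ m : ℕ, 2 ≤ m →
      κ / (m + 1) ≤ (m + α) ^ m * Real.exp (-(m + α)) / ∏ n ∈ Finset.Icc 1 m, ((n : ℝ) + α) := by
  set C := 1 - (α + 1 / 2) * Real.log (1 + α) with hC
  refine ⟨Real.exp (-α - C), Real.exp_pos _, fun m hm => ?_⟩
  have hm' : (2 : ℝ) ≤ m := by exact_mod_cast hm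
  have hP := prod_pos fun n hn => natCast_add_pos_of_mem_Icc hα' (m := m) (n := n) hn
  have hy : (0 : ℝ) < m + α := by linarith
  have hlog : 0 ≤ Real.log (m + α) := Real.log_nonneg (by linarith)
  have hlog_le : (α + 1 / 2) * Real.log (m + α) ≤ Real.log (m + 1) := by
    have := Real.log_le_log (by linarith) (by linarith : (m : ℝ) + α ≤ m + 1)
    rcases le_total 0 (α + 1 / 2) with h | h <;> nlinarith
  have hsum := sum_log_add_le hα' (m := m) (by omega)
  rw [← Real.log_le_log_iff (by positivity) (div_pos (by positivity) hP),
    Real.log_div (by positivity) (by positivity), Real.log_div (by positivity) hP.ne',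
    Real.log_mul (by positivity) (by positivity), Real.log_pow, Real.log_exp, Real.log_exp,
    Real.log_prod fun n hn => (natCast_add_pos_of_mem_Icc hα' hn).ne']
  linarith

theorem exists_pos_div_le_lintegral_annulus {f : ℂ → ℂ} (hf : Differentiable ℂ f)
    (hf0 : ‖f 0‖ = 1) {α : ℝ} (hα : α ≤ 1 / 2) (hα' : -1 < α) {z : ℕ → ℂ}
    (hz : ∀ n, 1 ≤ n → ‖z n‖ = √(n + α)) (hzero : ∀ n, 1 ≤ n → f (z n) = 0) :
    ∃ c > 0, ∀ m : ℕ, 2 ≤ m → ENNReal.ofReal (c / (m + 1)) ≤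
      ∫⁻ r in Ioo √(m + α) √(m + α + 1), ENNReal.ofReal
        (2 * π * r * (Real.exp (-r ^ 2) * circleAverage (fun w => ‖f w‖ ^ 2) 0 r)) := by
  obtain ⟨κ, hκ, hstirling⟩ := exists_pos_div_le_pow_mul_exp_div_prod hα hα'
  refine ⟨2 * π / 3 * Real.exp (-1) * κ, by positivity, fun m hm => ?_⟩
  have hm' : (2 : ℝ) ≤ m := by exact_mod_cast hm
  have hP : 0 < ∏ n ∈ Finset.Icc 1 m, ((n : ℝ) + α) :=
    prod_pos fun n hn => natCast_add_pos_of_mem_Icc hα' hn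
  refine le_trans ?_ (ofReal_le_lintegral_Ioo_sqrt (by linarith) hP m fun r hr =>
    pow_le_prod_mul_circleAverage hf hf0 hα' hz hzero m ((Real.sqrt_nonneg _).trans_lt hr.1))
  rw [mul_div_assoc]
  exact ENNReal.ofReal_le_ofReal (mul_le_mul_of_nonneg_left (hstirling m hm) (by positivity))

theorem circleAverage_mul_exp_neg_norm_sq (g : ℂ → ℝ) (r : ℝ) :
    circleAverage (fun w => g w * Real.exp (-‖w‖ ^ 2)) 0 r =
      Real.exp (-r ^ 2) * circleAverage g 0 r := by
  rw [← smul_eq_mul, ← circleAverage_fun_smul]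
  refine circleAverage_congr_sphere fun w hw => ?_
  rw [mem_sphere_zero_iff_norm] at hw
  simp [hw, mul_comm]

theorem ENNReal.tsum_ofReal_eq_top_of_not_summable {ι : Type*} {f : ι → ℝ} (hf : ∀ i, 0 ≤ f i)
    (h : ¬Summable f) : ∑' i, ENNReal.ofReal (f i) = ⊤ := by
  by_contra hne
  exact h (by simpa [ENNReal.toReal_ofReal (hf _)] using ENNReal.summable_toReal hne)

theorem Real.not_summable_div_natCast_add {c : ℝ} (hc : c ≠ 0) (k : ℕ) :
    ¬Summable fun n : ℕ => c / ((n + k : ℕ) : ℝ) := by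
  simp_rw [div_eq_mul_one_div c, summable_mul_left_iff hc]
  exact (summable_nat_add_iff k).not.2 Real.not_summable_one_div_natCast

/-- sequences of moduli √(n+α), α ≤ 1/2, are uniqueness sets for F². -/
theorem statement2
    (α : ℝ) (hα : α ≤ 1/2) (hα' : -1 < α)
    (z : ℕ → ℂ) (hz : ∀ n : ℕ, 1 ≤ n → ‖z n‖ = Real.sqrt (n + α))
    (f : ℂ → ℂ) (hf : Differentiable ℂ f) (hf0 : ‖f 0‖ = 1)
    (hzeros : ∀ w : ℂ, f w = 0 ↔ ∃ n : ℕ, 1 ≤ n ∧ w = z n) :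
    ∫⁻ w : ℂ, ENNReal.ofReal ((‖f w‖) ^ 2 *
      Real.exp (-(‖w‖) ^ 2)) = ⊤ := by
  obtain ⟨c, hc, hannulus⟩ := exists_pos_div_le_lintegral_annulus hf hf0 hα hα' hz
    fun n hn => (hzeros _).2 ⟨n, hn, rfl⟩
  set radius : ℕ → ℝ := fun k => √((k + 2 : ℕ) + α)
  have hradius : Monotone radius := fun i j hij => Real.sqrt_le_sqrt (by gcongr)
  have hfc := hf.continuous
  rw [lintegral_eq_lintegral_Ioi_circleAverage (by fun_prop) fun w => by positivity, eq_top_iff]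
  simp_rw [circleAverage_mul_exp_neg_norm_sq]
  set F : ℝ → ENNReal := fun r => ENNReal.ofReal
    (2 * π * r * (Real.exp (-r ^ 2) * circleAverage (fun w => ‖f w‖ ^ 2) 0 r))
  calc ⊤ = ∑' k : ℕ, ENNReal.ofReal (c / ((k + 3 : ℕ) : ℝ)) :=
        (ENNReal.tsum_ofReal_eq_top_of_not_summable (fun k => by positivity)
          (Real.not_summable_div_natCast_add hc.ne' 3)).symm
    _ ≤ ∑' k, ∫⁻ r in Ioo (radius k) (radius (k + 1)), F r := ENNReal.tsum_le_tsum fun k => by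
        have hnext : radius (k + 1) = √((k + 2 : ℕ) + α + 1) := by
          simp only [radius]; push_cast; ring_nf
        rw [hnext, show ((k + 3 : ℕ) : ℝ) = (k + 2 : ℕ) + 1 by push_cast; ring]
        exact hannulus (k + 2) (by omega)
    _ = ∫⁻ r in ⋃ k, Ioo (radius k) (radius (k + 1)), F r :=
        (lintegral_iUnion (fun k => measurableSet_Ioo) hradius.pairwise_disjoint_on_Ioo_succ _).symm
    _ ≤ ∫⁻ r in Ioi 0, F r :=
        lintegral_mono_set (iUnion_subset fun k r hr => (Real.sqrt_nonneg _).trans_lt hr.1)
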